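/- arXiv:1508.07167 — 5 statements merged into one kernel-verified Lean document; each statement's English description precedes it below -/
import Mathlib

section
/- Let ω be a modulus of continuity with limsup_{δ→0+} ω(δ)/√δ = ∞. Then there exists a sequence δ_k > 0 (k = 1,2,…) such that ∑_{k=1}^∞ δ_k < 2π/6 and ∑_{k=1}^∞ (ω(δ_k))² = ∞. -/
open Real Filter

noncomputable section

/-- A modulus of continuity: a nondecreasing continuous function `ω : [0,∞) → [0,∞)`
with `ω 0 = 0` and `ω (x+y) ≤ ω x + ω y`. -/
def IsModulusOfContinuity (ω : ℝ → ℝ) : Prop :=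
  ContinuousOn ω (Set.Ici 0) ∧ MonotoneOn ω (Set.Ici 0) ∧ ω 0 = 0 ∧
    (∀ x : ℝ, 0 ≤ x → 0 ≤ ω x) ∧
    ∀ x y : ℝ, 0 ≤ x → 0 ≤ y → ω (x + y) ≤ ω x + ω y

/-! Since `ω(δ)² / δ` is unbounded as `δ → 0⁺`, there are `d k` with `d k` and `d k / ω(d k)²`
both below `c k = ε 2⁻ᵏ / 8`. Repeating `d k` exactly `⌈ω(d k)⁻²⌉` times adds at most `2 c k`
to `∑ δ` but at least `1` to `∑ ω(δ)²`. -/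

open Topology

section Repetition

variable {n : ℕ → ℕ} {a : ℕ → ℝ}

theorem summable_sigma_fin_iff (ha : ∀ k, 0 ≤ a k) :
    Summable (fun i : Σ k, Fin (n k) => a i.1) ↔ Summable fun k => n k * a k := by
  simp [summable_sigma_of_nonneg fun i => ha i.1, fun k => (Summable.of_finite : Summable
    fun _ : Fin (n k) => a k), nsmul_eq_mul]

theorem tsum_sigma_fin (h : Summable fun i : Σ k, Fin (n k) => a i.1) :
    ∑' i : Σ k, Fin (n k), a i.1 = ∑' k, n k * a k := by
  simp [h.tsum_sigma, nsmul_eq_mul]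

end Repetition

theorem exists_lt_mul_sq_of_frequently_lt_div_sqrt {ω : ℝ → ℝ}
    (h : ∀ M : ℝ, ∃ᶠ δ in 𝓝[>] 0, M < ω δ / √δ) {c : ℝ} (hc : 0 < c) :
    ∃ δ, 0 < δ ∧ δ < c ∧ δ < c * ω δ ^ 2 := by
  obtain ⟨δ, hM, hδ0, hδc⟩ := ((h (√c)⁻¹).and_eventually (Ioo_mem_nhdsGT hc)).exists
  have hlt : (√c)⁻¹ * √δ < ω δ := (lt_div_iff₀ (sqrt_pos.2 hδ0)).1 hM
  refine ⟨δ, hδ0, hδc, ?_⟩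
  have hsq := pow_lt_pow_left₀ hlt (by positivity) two_ne_zero
  rwa [mul_pow, inv_pow, sq_sqrt hc.le, sq_sqrt hδ0.le, inv_mul_lt_iff₀ hc] at hsq

theorem exists_nat_one_le_mul_and_mul_le {x y c : ℝ} (hx : 0 < x) (hxc : x < c)
    (hxy : x < c * y) : ∃ n : ℕ, 0 < n ∧ 1 ≤ n * y ∧ n * x ≤ 2 * c := by
  have hy : 0 < y := pos_of_mul_pos_right (hx.trans hxy) (hx.trans hxc).le
  refine ⟨⌈y⁻¹⌉₊, Nat.ceil_pos.2 (inv_pos.2 hy), ?_, ?_⟩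
  · exact (inv_le_iff_one_le_mul₀ hy).1 (Nat.le_ceil _)
  have hdiv : x / y < c := (div_lt_iff₀ hy).2 hxy
  calc (⌈y⁻¹⌉₊ : ℝ) * x ≤ (y⁻¹ + 1) * x := by
        gcongr; exact (Nat.ceil_lt_add_one (inv_nonneg.2 hy.le)).le
    _ = x / y + x := by ring
    _ ≤ 2 * c := by linarith

theorem exists_pos_summable_tsum_lt_not_summable_sq {ω : ℝ → ℝ}
    (h : ∀ c > 0, ∃ δ, 0 < δ ∧ δ < c ∧ δ < c * ω δ ^ 2) {ε : ℝ} (hε : 0 < ε) :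
    ∃ δ : ℕ → ℝ, (∀ k, 0 < δ k) ∧ Summable δ ∧ ∑' k, δ k < ε ∧
      ¬ Summable fun k => ω (δ k) ^ 2 := by
  set c : ℕ → ℝ := fun k => ε / 8 * (1 / 2) ^ k
  have hc : Summable c := summable_geometric_two.mul_left _
  choose d hd0 hdc hdω using fun k => h (c k) (by positivity)
  choose n hn_pos hn_sq hn_d using fun k => exists_nat_one_le_mul_and_mul_le (hd0 k) (hdc k) (hdω k)
  have hsum : Summable fun k => n k * d k :=
    .of_nonneg_of_le (fun k => mul_nonneg (n k).cast_nonneg (hd0 k).le) hn_d (hc.mul_left 2)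
  have hsum_sigma : Summable fun i : Σ k, Fin (n k) => d i.1 :=
    (summable_sigma_fin_iff fun k => (hd0 k).le).2 hsum
  -- makes `Σ k, Fin (n k)` infinite, hence equivalent to `ℕ`
  have : ∀ k, Nonempty (Fin (n k)) := fun k => ⟨⟨0, hn_pos k⟩⟩
  obtain ⟨e⟩ := nonempty_equiv_of_countable (α := ℕ) (β := Σ k, Fin (n k))
  refine ⟨fun m => d (e m).1, fun m => hd0 _, e.summable_iff.2 hsum_sigma, ?_, fun hs => ?_⟩
  · calc ∑' m, d (e m).1 = ∑' k, n k * d k :=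
          (e.tsum_eq fun i => d i.1).trans (tsum_sigma_fin hsum_sigma)
      _ ≤ ∑' k, 2 * c k := hsum.tsum_le_tsum hn_d (hc.mul_left 2)
      _ = ε / 2 := by simp only [c, tsum_mul_left, tsum_geometric_two]; ring
      _ < ε := by linarith
  · have hs' : Summable fun i : Σ k, Fin (n k) => ω (d i.1) ^ 2 := e.summable_iff.1 hs
    have hblocks := (summable_sigma_fin_iff fun k => sq_nonneg (ω (d k))).1 hs'
    have hone : Summable fun _ : ℕ => (1 : ℝ) :=
      .of_nonneg_of_le (fun _ => zero_le_one) hn_sq hblocks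
    exact one_ne_zero ((summable_const_iff 1).1 hone)

theorem exists_sequence_small_sum_divergent_omega_sq_general (ω : ℝ → ℝ)
    (hlimsup : ∀ M : ℝ, ∃ᶠ δ in nhdsWithin 0 (Set.Ioi 0), M < ω δ / Real.sqrt δ) :
    ∃ δ : ℕ → ℝ, (∀ k, 0 < δ k) ∧ Summable δ ∧ (∑' k, δ k) < 2 * Real.pi / 6 ∧
      ¬ Summable (fun k => (ω (δ k)) ^ 2) :=
  exists_pos_summable_tsum_lt_not_summable_sq
    (fun _ hc => exists_lt_mul_sq_of_frequently_lt_div_sqrt hlimsup hc) (by positivity)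

/-- If `ω` is a modulus of continuity with `limsup_{δ→0+} ω(δ)/√δ = ∞`, then there is a
sequence `δ_k > 0` with `∑ δ_k < 2π/6` and `∑ (ω(δ_k))² = ∞`. -/
theorem exists_sequence_small_sum_divergent_omega_sq (ω : ℝ → ℝ)
    (hω : IsModulusOfContinuity ω)
    (hlimsup : ∀ M : ℝ, ∃ᶠ δ in nhdsWithin 0 (Set.Ioi 0), M < ω δ / Real.sqrt δ) :
    ∃ δ : ℕ → ℝ, (∀ k, 0 < δ k) ∧ Summable δ ∧ (∑' k, δ k) < 2 * Real.pi / 6 ∧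
      ¬ Summable (fun k => (ω (δ k)) ^ 2) :=
  exists_sequence_small_sum_divergent_omega_sq_general ω hlimsup
end
end

section
/- Let ω be a modulus of continuity, let δ_k > 0 satisfy ∑_{k=1}^∞ δ_k < 2π/6, and let u and v be the associated sum-of-triangles functions. Then u and v belong to Lip_ω(𝕋): there is a constant C > 0 such that |u(t₁)-u(t₂)| ≤ C·ω(|t₁-t₂|) and |v(t₁)-v(t₂)| ≤ C·ω(|t₁-t₂|) for all t₁,t₂. -/
/-!
Subadditivity and monotonicity make `ω x / x` almost decreasing: `ω d / d ≤ 2 ω h / h` for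
`0 < h ≤ d`. A single term `ω δ · Δ_I` with `|I| ≥ 2δ` has height `ω δ` and slope at most
`ω δ / δ`, so it changes by at most `2 ω |t₁ - t₂|` (use the height when `|t₁ - t₂| ≥ δ`, the slope
otherwise). The supports of the terms are disjoint, so `u t₁ - u t₂` involves at most two terms.
-/

open Real Filter

noncomputable section

/-- The triangle function `Δ_{[a,b]}`: zero outside `[a, b]`, equal to `1` at the center
`(a+b)/2`, and linear on each half of `[a, b]`. -/
def triangle (a b t : ℝ) : ℝ := max 0 (1 - |t - (a + b) / 2| / ((b - a) / 2))

open Function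

namespace IsModulusOfContinuity

variable {ω : ℝ → ℝ}

theorem map_zero (hω : IsModulusOfContinuity ω) : ω 0 = 0 := hω.2.2.1

theorem nonneg (hω : IsModulusOfContinuity ω) {x : ℝ} (hx : 0 ≤ x) : 0 ≤ ω x := hω.2.2.2.1 x hx

theorem mono (hω : IsModulusOfContinuity ω) {x y : ℝ} (hx : 0 ≤ x) (hxy : x ≤ y) : ω x ≤ ω y :=
  hω.2.1 (Set.mem_Ici.mpr hx) (Set.mem_Ici.mpr (hx.trans hxy)) hxy

theorem map_add_le (hω : IsModulusOfContinuity ω) {x y : ℝ} (hx : 0 ≤ x) (hy : 0 ≤ y) :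
    ω (x + y) ≤ ω x + ω y :=
  hω.2.2.2.2 x y hx hy

theorem map_nat_mul_le (hω : IsModulusOfContinuity ω) {h : ℝ} (hh : 0 ≤ h) (n : ℕ) :
    ω (n * h) ≤ n * ω h := by
  induction n with
  | zero => simp [hω.map_zero]
  | succ n ih =>
    calc ω ((n + 1 : ℕ) * h) = ω (n * h + h) := by push_cast; ring_nf
      _ ≤ ω (n * h) + ω h := hω.map_add_le (by positivity) hh
      _ ≤ n * ω h + ω h := by linarith
      _ = (n + 1 : ℕ) * ω h := by push_cast; ring

theorem div_le_two_mul_div (hω : IsModulusOfContinuity ω) {h d : ℝ} (hh : 0 < h)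
    (hhd : h ≤ d) : ω d / d ≤ 2 * (ω h / h) := by
  have hd : 0 < d := hh.trans_le hhd
  set n := ⌈d / h⌉₊
  have hdn : d ≤ n * h := (div_le_iff₀ hh).mp (Nat.le_ceil _)
  have hn : (n : ℝ) ≤ 2 * (d / h) := by
    linarith [Nat.ceil_lt_add_one (div_nonneg hd.le hh.le), (one_le_div hh).mpr hhd]
  have hωd : ω d ≤ 2 * (d / h) * ω h :=
    calc ω d ≤ ω (n * h) := hω.mono hd.le hdn
      _ ≤ n * ω h := hω.map_nat_mul_le hh.le n
      _ ≤ 2 * (d / h) * ω h := by gcongr; exact hω.nonneg hh.le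
  rw [div_le_iff₀ hd]
  calc ω d ≤ 2 * (d / h) * ω h := hωd
    _ = 2 * (ω h / h) * d := by ring

end IsModulusOfContinuity

theorem triangle_nonneg (a b t : ℝ) : 0 ≤ triangle a b t := le_max_left _ _

theorem triangle_le_one {a b : ℝ} (hab : a ≤ b) (t : ℝ) : triangle a b t ≤ 1 := by
  have : 0 ≤ |t - (a + b) / 2| / ((b - a) / 2) := by
    apply div_nonneg (abs_nonneg _); linarith
  exact max_le zero_le_one (by linarith)

theorem support_triangle_subset {a b : ℝ} (hab : a < b) :
    support (triangle a b) ⊆ Set.Ioo a b := by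
  intro t ht
  by_contra hmem
  have hr : 0 < (b - a) / 2 := by linarith
  have hfar : (b - a) / 2 ≤ |t - (a + b) / 2| := by
    rcases not_and_or.mp hmem with h | h
    · rw [abs_sub_comm, le_abs]; left; linarith
    · rw [le_abs]; left; linarith
  have : 1 ≤ |t - (a + b) / 2| / ((b - a) / 2) := (one_le_div hr).mpr hfar
  exact ht (max_eq_left (by linarith))

theorem abs_triangle_sub_le {a b : ℝ} (hab : a ≤ b) (t₁ t₂ : ℝ) :
    |triangle a b t₁ - triangle a b t₂| ≤ |t₁ - t₂| / ((b - a) / 2) := by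
  have hr : 0 ≤ (b - a) / 2 := by linarith
  set c := (a + b) / 2
  calc |triangle a b t₁ - triangle a b t₂|
      ≤ |(1 - |t₁ - c| / ((b - a) / 2)) - (1 - |t₂ - c| / ((b - a) / 2))| := by
        simp only [triangle, max_comm (0 : ℝ)]
        exact abs_max_sub_max_le_abs _ _ _
    _ = |(|t₂ - c| - |t₁ - c|) / ((b - a) / 2)| := by ring_nf
    _ = |(|t₂ - c| - |t₁ - c|)| / ((b - a) / 2) := by rw [abs_div, abs_of_nonneg hr]
    _ ≤ |t₁ - t₂| / ((b - a) / 2) := by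
        refine div_le_div_of_nonneg_right ?_ hr
        calc |(|t₂ - c| - |t₁ - c|)| ≤ |(t₂ - c) - (t₁ - c)| := abs_abs_sub_abs_le_abs_sub _ _
          _ = |t₁ - t₂| := by rw [abs_sub_comm]; ring_nf

theorem abs_mul_triangle_sub_le {ω : ℝ → ℝ} (hω : IsModulusOfContinuity ω) {a b d : ℝ}
    (hd : 0 < d) (hab : 2 * d ≤ b - a) (t₁ t₂ : ℝ) :
    |ω d * triangle a b t₁ - ω d * triangle a b t₂| ≤ 2 * ω |t₁ - t₂| := by
  rcases eq_or_ne t₁ t₂ with rfl | hne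
  · simp [hω.map_zero]
  have hs : 0 < |t₁ - t₂| := abs_pos.mpr (sub_ne_zero.mpr hne)
  have hωd : 0 ≤ ω d := hω.nonneg hd.le
  rw [← mul_sub, abs_mul, abs_of_nonneg hωd]
  rcases le_or_gt d |t₁ - t₂| with hfar | hnear
  · have hΔ : |triangle a b t₁ - triangle a b t₂| ≤ 1 := by
      have := triangle_le_one (by linarith : a ≤ b)
      exact abs_sub_le_iff.mpr ⟨by linarith [this t₁, triangle_nonneg a b t₂],
        by linarith [this t₂, triangle_nonneg a b t₁]⟩
    nlinarith [hω.mono hd.le hfar, hω.nonneg (abs_nonneg (t₁ - t₂))]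
  · have hΔ : |triangle a b t₁ - triangle a b t₂| ≤ |t₁ - t₂| / d :=
      (abs_triangle_sub_le (by linarith) t₁ t₂).trans
        (div_le_div_of_nonneg_left (abs_nonneg _) hd (by linarith))
    calc ω d * |triangle a b t₁ - triangle a b t₂| ≤ ω d * (|t₁ - t₂| / d) := by gcongr
      _ = ω d / d * |t₁ - t₂| := by ring
      _ ≤ 2 * (ω |t₁ - t₂| / |t₁ - t₂|) * |t₁ - t₂| := by
          gcongr; exact hω.div_le_two_mul_div hs hnear.le
      _ = 2 * ω |t₁ - t₂| := by field_simp

theorem exists_tsum_eq_of_pairwise_disjoint_support {ι α : Type*} [Nonempty ι]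
    {f : ι → α → ℝ} (hf : Pairwise (Disjoint on fun i => support (f i))) (x : α) :
    ∃ i₀, (∑' i, f i x) = f i₀ x ∧ ∀ i ≠ i₀, f i x = 0 := by
  suffices ∃ i₀, ∀ i ≠ i₀, f i x = 0 by
    obtain ⟨i₀, h⟩ := this
    exact ⟨i₀, tsum_eq_single i₀ h, h⟩
  by_cases hx : ∀ i, f i x = 0
  · exact ⟨Classical.arbitrary ι, fun i _ => hx i⟩
  obtain ⟨i₀, hi₀⟩ := not_forall.mp hx
  exact ⟨i₀, fun i hi => by_contra fun hix => Set.disjoint_left.mp (hf hi) hix hi₀⟩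

theorem abs_tsum_sub_tsum_le_of_pairwise_disjoint_support {ι α : Type*} [Nonempty ι]
    {f : ι → α → ℝ} (hf : Pairwise (Disjoint on fun i => support (f i)))
    {M : ℝ} {x y : α} (hM : ∀ i, |f i x - f i y| ≤ M) :
    |(∑' i, f i x) - ∑' i, f i y| ≤ 2 * M := by
  obtain ⟨i, hx, hxi⟩ := exists_tsum_eq_of_pairwise_disjoint_support hf x
  obtain ⟨j, hy, hyj⟩ := exists_tsum_eq_of_pairwise_disjoint_support hf y
  rw [hx, hy]
  rcases eq_or_ne i j with rfl | hij
  · linarith [hM i, abs_nonneg (f i x - f i y)]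
  · calc |f i x - f j y| = |(f i x - f i y) + (f j x - f j y)| := by
          rw [hyj i hij, hxi j hij.symm]; ring_nf
      _ ≤ |f i x - f i y| + |f j x - f j y| := abs_add_le _ _
      _ ≤ 2 * M := by linarith [hM i, hM j]

theorem pairwise_disjoint_Ioo_of_le_succ {a b : ℕ → ℝ} (hab : ∀ k, a k < b k)
    (hba : ∀ k, b k ≤ a (k + 1)) : Pairwise (Disjoint on fun k => Set.Ioo (a k) (b k)) := by
  have ha : Monotone a := monotone_nat_of_le_succ fun k => ((hab k).trans_le (hba k)).le
  refine (pairwise_disjoint_on _).mpr fun j k hjk => Set.Ioo_disjoint_Ioo.mpr ?_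
  exact (min_le_left _ _).trans ((hba j).trans (ha hjk) |>.trans (le_max_right _ _))

theorem abs_tsum_mul_triangle_sub_le {ω : ℝ → ℝ} (hω : IsModulusOfContinuity ω)
    {δ a b : ℕ → ℝ} (hδ : ∀ k, 0 < δ k) (hwidth : ∀ k, 2 * δ k ≤ b k - a k)
    (hsep : ∀ k, b k ≤ a (k + 1)) (t₁ t₂ : ℝ) :
    |(∑' k, ω (δ k) * triangle (a k) (b k) t₁) - ∑' k, ω (δ k) * triangle (a k) (b k) t₂|
      ≤ 4 * ω |t₁ - t₂| := by
  have hab : ∀ k, a k < b k := fun k => by linarith [hδ k, hwidth k]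
  have hsupp : Pairwise (Disjoint on fun k => support
      fun t => ω (δ k) * triangle (a k) (b k) t) :=
    fun j k hjk => (pairwise_disjoint_Ioo_of_le_succ hab hsep hjk).mono
      ((support_mul_subset_right _ _).trans (support_triangle_subset (hab j)))
      ((support_mul_subset_right _ _).trans (support_triangle_subset (hab k)))
  have := abs_tsum_sub_tsum_le_of_pairwise_disjoint_support hsupp
    (fun k => abs_mul_triangle_sub_le hω (hδ k) (hwidth k) t₁ t₂)
  linarith

theorem sum_of_triangles_mem_LipOmega_general (ω : ℝ → ℝ) (hω : IsModulusOfContinuity ω)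
    (δ : ℕ → ℝ) (hδ : ∀ k, 0 < δ k)
    (a : ℕ → ℝ) (ha : ∀ k, a k + 6 * δ k < a (k + 1))
    (u v : ℝ → ℝ)
    (hu : ∀ t, u t = ∑' k, ω (δ k) * triangle (a k) (a k + 6 * δ k) t)
    (hv : ∀ t, v t = ∑' k, ω (δ k) * triangle (a k) (a k + 3 * δ k) t) :
    ∃ C > 0, ∀ t₁ ∈ Set.Icc (0 : ℝ) (2 * Real.pi), ∀ t₂ ∈ Set.Icc (0 : ℝ) (2 * Real.pi),
      |u t₁ - u t₂| ≤ C * ω |t₁ - t₂| ∧ |v t₁ - v t₂| ≤ C * ω |t₁ - t₂| := by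
  refine ⟨4, by norm_num, fun t₁ _ t₂ _ => ⟨?_, ?_⟩⟩
  · rw [hu, hu]
    exact abs_tsum_mul_triangle_sub_le hω hδ (b := fun k => a k + 6 * δ k)
      (fun k => by linarith [hδ k]) (fun k => (ha k).le) t₁ t₂
  · rw [hv, hv]
    exact abs_tsum_mul_triangle_sub_le hω hδ (b := fun k => a k + 3 * δ k)
      (fun k => by linarith [hδ k]) (fun k => by linarith [ha k, hδ k]) t₁ t₂

/-- Let `ω` be a modulus of continuity, `δ_k > 0` with `∑ δ_k < 2π/6`, and let `u`, `v` be the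
associated sum-of-triangles functions built over disjoint intervals `I_k = [a_k, a_k + 6δ_k]`
inside `(0, 2π)` (with `J_k = [a_k, a_k + 3δ_k]` the left half of `I_k`). Then `u, v ∈ Lip_ω`:
there is a constant `C > 0` with `|u t₁ - u t₂| ≤ C ω(|t₁ - t₂|)` and
`|v t₁ - v t₂| ≤ C ω(|t₁ - t₂|)` for all `t₁, t₂ ∈ [0, 2π]`. -/
theorem sum_of_triangles_mem_LipOmega (ω : ℝ → ℝ) (hω : IsModulusOfContinuity ω)
    (δ : ℕ → ℝ) (hδ : ∀ k, 0 < δ k) (hδsum : Summable δ)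
    (hδlt : (∑' k, δ k) < 2 * Real.pi / 6)
    (a : ℕ → ℝ) (ha0 : ∀ k, 0 < a k) (ha : ∀ k, a k + 6 * δ k < a (k + 1))
    (ha2π : ∀ k, a k + 6 * δ k < 2 * Real.pi)
    (u v : ℝ → ℝ)
    (hu : ∀ t, u t = ∑' k, ω (δ k) * triangle (a k) (a k + 6 * δ k) t)
    (hv : ∀ t, v t = ∑' k, ω (δ k) * triangle (a k) (a k + 3 * δ k) t) :
    ∃ C > 0, ∀ t₁ ∈ Set.Icc (0 : ℝ) (2 * Real.pi), ∀ t₂ ∈ Set.Icc (0 : ℝ) (2 * Real.pi),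
      |u t₁ - u t₂| ≤ C * ω |t₁ - t₂| ∧ |v t₁ - v t₂| ≤ C * ω |t₁ - t₂| :=
  sum_of_triangles_mem_LipOmega_general ω hω δ hδ a ha u v hu hv
end
end

section
/- Let ω be a modulus of continuity, let δ_k > 0 satisfy ∑_{k=1}^∞ δ_k < 2π/6, and let u and v be the associated sum-of-triangles functions. Fix k, and let U_k : ℝ → ℝ be the nondecreasing continuous function with U_k(t) = 0 for t ≤ a_k, U_k(t) = u(t) for t ∈ J_k = [a_k, (a_k+b_k)/2], and U_k(t) = ω(δ_k) for t ≥ (a_k+b_k)/2; let μ_k be the Stieltjes (Lebesgue–Stieltjes) measure on ℝ induced by U_k. Then ∫_{[a_k+δ_k, a_k+2δ_k]} v dμ_k ≥ (2/9)(ω(δ_k))². -/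
open Real Filter MeasureTheory

noncomputable section

/-!
On `[a_k + δ_k, a_k + 2δ_k]` only the `k`-th triangles of `u` and `v` are nonzero, so `U = u`
rises there from `ω(δ_k)/3` to `2ω(δ_k)/3`, giving the interval `U`-mass at least `ω(δ_k)/3`,
while `v ≥ 2ω(δ_k)/3` on it, being within `δ_k/2` of the apex of a triangle of half-width
`3δ_k/2`.
-/

open Set

lemma triangle_eq_zero {a b t : ℝ} (hab : a < b) (ht : t ∉ Ioo a b) : triangle a b t = 0 := by
  have hdist : (b - a) / 2 ≤ |t - (a + b) / 2| := by
    rcases not_and_or.mp ht with h | h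
    · rw [abs_sub_comm, abs_of_nonneg (by linarith)]; linarith
    · rw [abs_of_nonneg (by linarith)]; linarith
  have : 1 ≤ |t - (a + b) / 2| / ((b - a) / 2) := (one_le_div (by linarith)).mpr hdist
  exact max_eq_left (by linarith)

lemma triangle_of_mem_left_half {a b t : ℝ} (hab : a < b) (ht : t ∈ Icc a ((a + b) / 2)) :
    triangle a b t = (t - a) / ((b - a) / 2) := by
  have hh : 0 < (b - a) / 2 := by linarith
  have hsum : (t - a) / ((b - a) / 2) + ((a + b) / 2 - t) / ((b - a) / 2) = 1 := by
    rw [← add_div, div_eq_one_iff_eq hh.ne']; ring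
  have hnonneg : 0 ≤ (t - a) / ((b - a) / 2) := div_nonneg (by linarith [ht.1]) hh.le
  unfold triangle
  rw [abs_sub_comm, abs_of_nonneg (by linarith [ht.2]), max_eq_right (by linarith)]
  linarith

lemma le_triangle {a b s t : ℝ} (hab : a < b)
    (ht : |t - (a + b) / 2| ≤ (1 - s) * ((b - a) / 2)) : s ≤ triangle a b t := by
  have : |t - (a + b) / 2| / ((b - a) / 2) ≤ 1 - s := (div_le_iff₀ (by linarith)).mpr ht
  exact (by linarith : s ≤ 1 - |t - (a + b) / 2| / ((b - a) / 2)).trans (le_max_right _ _)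

lemma continuous_triangle (a b : ℝ) : Continuous (triangle a b) := by
  unfold triangle
  fun_prop

lemma tsum_mul_triangle_eq_of_mem_Ioo {a w : ℕ → ℝ} (hw : ∀ j, 0 < w j)
    (hsep : ∀ j, a j + w j < a (j + 1)) (c : ℕ → ℝ) {k : ℕ} {t : ℝ}
    (ht : t ∈ Ioo (a k) (a k + w k)) :
    ∑' j, c j * triangle (a j) (a j + w j) t = c k * triangle (a k) (a k + w k) t := by
  have ha_mono : StrictMono a := strictMono_nat_of_lt_succ fun j => by linarith [hsep j, hw j]
  refine tsum_eq_single k fun j hj => ?_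
  suffices t ∉ Ioo (a j) (a j + w j) by
    rw [triangle_eq_zero (by linarith [hw j]) this, mul_zero]
  rintro ⟨hj₁, hj₂⟩
  rcases hj.lt_or_gt with hjk | hkj
  · linarith [hsep j, ha_mono.monotone (Nat.succ_le_of_lt hjk), ht.1]
  · linarith [hsep k, ha_mono.monotone (Nat.succ_le_of_lt hkj), ht.2]

lemma StieltjesFunction.sub_le_measureReal_Icc (f : StieltjesFunction ℝ) (x y : ℝ) :
    f y - f x ≤ f.measure.real (Icc x y) :=
  calc f y - f x ≤ f.measure.real (Ioc x y) := by
        rw [measureReal_def, f.measure_Ioc, ENNReal.toReal_ofReal']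
        exact le_max_left _ _
    _ ≤ f.measure.real (Icc x y) := measureReal_mono Ioc_subset_Icc_self measure_Icc_lt_top.ne

lemma StieltjesFunction.mul_sub_le_setIntegral_Icc (f : StieltjesFunction ℝ) {g : ℝ → ℝ}
    {c x y : ℝ} (hc : 0 ≤ c) (hg : ∀ t ∈ Icc x y, c ≤ g t)
    (hgi : IntegrableOn g (Icc x y) f.measure) :
    c * (f y - f x) ≤ ∫ t in Icc x y, g t ∂f.measure :=
  calc c * (f y - f x) ≤ c * f.measure.real (Icc x y) :=
        mul_le_mul_of_nonneg_left (f.sub_le_measureReal_Icc x y) hc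
    _ ≤ ∫ t in Icc x y, g t ∂f.measure :=
        setIntegral_ge_of_const_le_real measurableSet_Icc measure_Icc_lt_top.ne hg hgi

theorem integral_v_stieltjes_lower_bound_general (ω : ℝ → ℝ) (hω : IsModulusOfContinuity ω)
    (δ : ℕ → ℝ) (hδ : ∀ k, 0 < δ k)
    (a : ℕ → ℝ) (ha : ∀ k, a k + 6 * δ k < a (k + 1))
    (u v : ℝ → ℝ)
    (hu : ∀ t, u t = ∑' k, ω (δ k) * triangle (a k) (a k + 6 * δ k) t)
    (hv : ∀ t, v t = ∑' k, ω (δ k) * triangle (a k) (a k + 3 * δ k) t)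
    (k : ℕ) (U : StieltjesFunction ℝ)
    (hUu : ∀ t ∈ Set.Icc (a k) (a k + 3 * δ k), U t = u t) :
    2 / 9 * (ω (δ k)) ^ 2 ≤
      ∫ t in Set.Icc (a k + δ k) (a k + 2 * δ k), v t ∂U.measure := by
  have hd := hδ k
  have hω₀ : 0 ≤ ω (δ k) := hω.2.2.2.1 _ hd.le
  have hU (s : ℝ) (hs : s ∈ Ioc 0 3) : U (a k + s * δ k) = ω (δ k) * (s / 3) := by
    have hmem : a k + s * δ k ∈ Icc (a k) (a k + 3 * δ k) :=
      ⟨by nlinarith [hs.1], by nlinarith [hs.2]⟩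
    rw [hUu _ hmem, hu, tsum_mul_triangle_eq_of_mem_Ioo (fun j => by linarith [hδ j]) ha _
      ⟨by nlinarith [hs.1], by nlinarith [hs.2]⟩, triangle_of_mem_left_half (by linarith)
      ⟨hmem.1, by linarith [hmem.2]⟩]
    field_simp
    ring
  have hv_eq : EqOn v (fun t => ω (δ k) * triangle (a k) (a k + 3 * δ k) t)
      (Icc (a k + δ k) (a k + 2 * δ k)) := fun t ht => by
    rw [hv]
    exact tsum_mul_triangle_eq_of_mem_Ioo (fun j => by linarith [hδ j])
      (fun j => by linarith [ha j, hδ j]) _ ⟨by linarith [ht.1], by linarith [ht.2]⟩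
  have hv_ge (t) (ht : t ∈ Icc (a k + δ k) (a k + 2 * δ k)) : 2 / 3 * ω (δ k) ≤ v t := by
    have : (2 : ℝ) / 3 ≤ triangle (a k) (a k + 3 * δ k) t :=
      le_triangle (by linarith) (abs_le.mpr ⟨by linarith [ht.1], by linarith [ht.2]⟩)
    rw [hv_eq ht]
    nlinarith
  have hv_int : IntegrableOn v (Icc (a k + δ k) (a k + 2 * δ k)) U.measure :=
    (((continuous_triangle _ _).const_smul (ω (δ k))).continuousOn.integrableOn_compact
      isCompact_Icc).congr_fun hv_eq.symm measurableSet_Icc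
  have hU₁ : U (a k + δ k) = ω (δ k) * (1 / 3) := by
    simpa only [one_mul] using hU 1 (by norm_num)
  calc 2 / 9 * ω (δ k) ^ 2 = 2 / 3 * ω (δ k) * (U (a k + 2 * δ k) - U (a k + δ k)) := by
        rw [hU 2 (by norm_num), hU₁]
        ring
    _ ≤ _ := U.mul_sub_le_setIntegral_Icc (by positivity) hv_ge hv_int

/-- Let `ω` be a modulus of continuity, `δ_k > 0` with `∑ δ_k < 2π/6`, and let `u`, `v` be the
associated sum-of-triangles functions over disjoint intervals `I_k = [a_k, b_k]`,
`b_k = a_k + 6δ_k`, inside `(0, 2π)`, with left halves `J_k = [a_k, a_k + 3δ_k]`. Fix `k` and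
let `U` be the nondecreasing continuous (Stieltjes) function with `U = 0` on `(-∞, a_k]`,
`U = u` on `J_k`, and `U = ω(δ_k)` on `[a_k + 3δ_k, ∞)`, inducing the Lebesgue–Stieltjes
measure `U.measure`. Then `∫_{[a_k+δ_k, a_k+2δ_k]} v dU ≥ (2/9)(ω(δ_k))²`. -/
theorem integral_v_stieltjes_lower_bound (ω : ℝ → ℝ) (hω : IsModulusOfContinuity ω)
    (δ : ℕ → ℝ) (hδ : ∀ k, 0 < δ k) (hδsum : Summable δ)
    (hδlt : (∑' k, δ k) < 2 * Real.pi / 6)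
    (a : ℕ → ℝ) (ha0 : ∀ k, 0 < a k) (ha : ∀ k, a k + 6 * δ k < a (k + 1))
    (ha2π : ∀ k, a k + 6 * δ k < 2 * Real.pi)
    (u v : ℝ → ℝ)
    (hu : ∀ t, u t = ∑' k, ω (δ k) * triangle (a k) (a k + 6 * δ k) t)
    (hv : ∀ t, v t = ∑' k, ω (δ k) * triangle (a k) (a k + 3 * δ k) t)
    (k : ℕ) (U : StieltjesFunction ℝ) (hUc : Continuous U)
    (hU0 : ∀ t ≤ a k, U t = 0)
    (hUu : ∀ t ∈ Set.Icc (a k) (a k + 3 * δ k), U t = u t)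
    (hU1 : ∀ t, a k + 3 * δ k ≤ t → U t = ω (δ k)) :
    2 / 9 * (ω (δ k)) ^ 2 ≤
      ∫ t in Set.Icc (a k + δ k) (a k + 2 * δ k), v t ∂U.measure :=
  integral_v_stieltjes_lower_bound_general ω hω δ hδ a ha u v hu hv k U hUu
end
end

section
/- If α > 1/2 and f : 𝕋 → ℂ satisfies the Lipschitz condition of order α (i.e. |f(t₁)−f(t₂)| ≤ C·d(t₁,t₂)^α for some constant C and all t₁,t₂ ∈ 𝕋), then f ∈ W_2^{1/2}(𝕋), i.e. ∑_{k∈ℤ} |f̂(k)|²|k| < ∞. -/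
/-! Bernstein's argument. For a step `h`, the difference `f (· + h) - f` has Fourier coefficients
`(e^{ikh} - 1) f̂(k)` and sup norm at most `C h^α`, so Parseval gives
`∑ |e^{ikh} - 1|² |f̂(k)|² ≤ C² h^{2α}`. On the dyadic block `2^n ≤ |k| < 2^{n+1}` the step
`h = 2π / 2^{n+2}` puts `|kh|` in `[π/2, π)`, where `|e^{ikh} - 1|² = 2 - 2 cos kh ≥ 2`; hence the
block contributes at most `2^n C² h^{2α} ≍ 2^{n(1-2α)}` to `∑ |f̂(k)|² |k|`, and these bounds form
a convergent geometric series exactly when `α > 1/2`. -/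

open Real MeasureTheory

noncomputable section

instance : Fact (0 < 2 * Real.pi) := ⟨by positivity⟩

open AddCircle Filter Topology

theorem continuous_of_dist_le_mul_rpow {X Y : Type*} [PseudoMetricSpace X] [PseudoMetricSpace Y]
    {f : X → Y} {C α : ℝ} (hα : 0 < α) (hf : ∀ x y, dist (f x) (f y) ≤ C * dist x y ^ α) :
    Continuous f := by
  refine continuous_iff_continuousAt.2 fun x => tendsto_iff_dist_tendsto_zero.2 ?_
  have hlim : Tendsto (fun y => C * dist y x ^ α) (𝓝 x) (𝓝 0) := by
    have hdist : Tendsto (fun y => dist y x) (𝓝 x) (𝓝 0) := by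
      simpa using (continuous_id.dist (continuous_const (y := x))).tendsto x
    simpa [Real.zero_rpow hα.ne'] using (hdist.rpow_const (Or.inr hα.le)).const_mul C
  exact squeeze_zero (fun _ => dist_nonneg) (fun y => hf y x) hlim

theorem summable_of_sum_le_of_fiber {ι : Type*} {a : ι → ℝ} (ha : 0 ≤ a) (φ : ι → ℕ)
    {b : ℕ → ℝ} (hb : Summable b)
    (hab : ∀ n (s : Finset ι), (∀ i ∈ s, φ i = n) → ∑ i ∈ s, a i ≤ b n) : Summable a := by
  classical
  have hb0 : 0 ≤ b := fun n => by simpa using hab n ∅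
  refine summable_of_sum_le (c := ∑' n, b n) ha fun u => ?_
  rw [← Finset.sum_fiberwise_of_maps_to fun i hi => Finset.mem_image_of_mem φ hi]
  calc ∑ n ∈ u.image φ, ∑ i ∈ u with φ i = n, a i
      ≤ ∑ n ∈ u.image φ, b n :=
        Finset.sum_le_sum fun n _ => hab n _ fun i hi => (Finset.mem_filter.1 hi).2
    _ ≤ ∑' n, b n := hb.sum_le_tsum _ fun n _ => hb0 n

theorem summable_two_pow_mul_sq_mul_div_two_pow_rpow {α : ℝ} (hα : 1 / 2 < α) (C : ℝ) {T : ℝ}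
    (hT : 0 ≤ T) : Summable fun n : ℕ => 2 ^ n * (C * (T / 2 ^ (n + 2)) ^ α) ^ 2 := by
  set r : ℝ := 2 / ((2 : ℝ) ^ α) ^ 2
  have hr : r < 1 := by
    rw [div_lt_one (by positivity), ← Real.rpow_mul_natCast zero_le_two]
    simpa using Real.rpow_lt_rpow_of_exponent_lt one_lt_two (by linarith : (1 : ℝ) < α * 2)
  refine ((summable_geometric_of_lt_one (by positivity) hr).mul_left
    ((C * (T / 4) ^ α) ^ 2)).congr fun n => ?_
  have hsplit : (T / 2 ^ (n + 2)) ^ α = (T / 4) ^ α / ((2 : ℝ) ^ α) ^ n := by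
    rw [Real.rpow_pow_comm zero_le_two, ← Real.div_rpow (by positivity) (by positivity), pow_add]
    ring_nf
  rw [hsplit, div_pow, ← pow_mul, mul_comm 2 n, pow_mul]
  field_simp

theorem norm_exp_mul_I_sub_one_sq (θ : ℝ) :
    ‖Complex.exp (θ * Complex.I) - 1‖ ^ 2 = 2 - 2 * Real.cos θ := by
  rw [mul_comm, Complex.norm_exp_I_mul_ofReal_sub_one]
  simp only [norm_mul, mul_pow, Real.norm_eq_abs, sq_abs]
  have hcos := Real.cos_two_mul' (θ / 2)
  rw [mul_div_cancel₀ θ two_ne_zero] at hcos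
  nlinarith [Real.sin_sq_add_cos_sq (θ / 2)]

section

variable {T : ℝ} [hT : Fact (0 < T)]

theorem fourierCoeff.sub {E : Type*} [NormedAddCommGroup E] [NormedSpace ℂ E]
    {f g : AddCircle T → E} (hf : Integrable f haarAddCircle) (hg : Integrable g haarAddCircle) :
    fourierCoeff (f - g) = fourierCoeff f - fourierCoeff g := by
  ext n
  simpa [fourierCoeff, -fourier_apply, smul_sub] using
    integral_sub (hf.fourier_smul (-n)) (hg.fourier_smul (-n))

theorem fourierCoeff_comp_add_right {E : Type*} [NormedAddCommGroup E] [NormedSpace ℂ E]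
    (f : AddCircle T → E) (c : AddCircle T) (n : ℤ) :
    fourierCoeff (fun t => f (t + c)) n = fourier n c • fourierCoeff f n := by
  have hshift : ∀ t, fourier (-n) (t - c) • f t = fourier n c • fourier (-n) t • f t := fun t => by
    have hsmul : (-n) • (t - c) = n • c + (-n) • t := by rw [smul_sub, neg_smul, neg_smul]; abel
    rw [smul_smul, fourier_apply, fourier_apply, fourier_apply, hsmul, toCircle_add, Circle.coe_mul]
  calc fourierCoeff (fun t => f (t + c)) n
      = ∫ t, fourier (-n) (t + c - c) • f (t + c) ∂haarAddCircle := by simp [fourierCoeff]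
    _ = ∫ t, fourier (-n) (t - c) • f t ∂haarAddCircle :=
        integral_add_right_eq_self (fun t => fourier (-n) (t - c) • f t) c
    _ = fourier n c • fourierCoeff f n := by simp_rw [hshift, integral_smul, fourierCoeff]

theorem hasSum_sq_norm_fourierCoeff_of_memLp {g : AddCircle T → ℂ}
    (hg : MemLp g 2 haarAddCircle) :
    HasSum (fun n => ‖fourierCoeff g n‖ ^ 2) (∫ t, ‖g t‖ ^ 2 ∂haarAddCircle) := by
  convert hasSum_sq_fourierCoeff hg.toLp using 1
  · simp [fourierCoeff_congr_ae hg.coeFn_toLp]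
  · refine integral_congr_ae ?_
    filter_upwards [hg.coeFn_toLp] with t ht
    simp [ht]

theorem fourierCoeff_comp_add_right_sub {f : AddCircle T → ℂ} (hf : Integrable f haarAddCircle)
    (c : AddCircle T) (n : ℤ) :
    fourierCoeff (fun t => f (t + c) - f t) n = (fourier n c - 1) * fourierCoeff f n := by
  have hsub := congr_fun (fourierCoeff.sub (hf.comp_add_right c) hf) n
  simp only [Pi.sub_apply, fourierCoeff_comp_add_right, smul_eq_mul] at hsub
  rw [sub_mul, one_mul, ← hsub]
  rfl

theorem two_le_norm_fourier_dyadic_sub_one_sq {n : ℕ} {k : ℤ} (hk : 2 ^ n ≤ k.natAbs)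
    (hk' : k.natAbs < 2 ^ (n + 1)) :
    2 ≤ ‖fourier k ((T / 2 ^ (n + 2) : ℝ) : AddCircle T) - 1‖ ^ 2 := by
  set θ : ℝ := π * k / 2 ^ (n + 1)
  have hfourier : fourier k ((T / 2 ^ (n + 2) : ℝ) : AddCircle T) = Complex.exp (θ * Complex.I) := by
    rw [fourier_coe_apply]
    congr 1
    have : (T : ℂ) ≠ 0 := Complex.ofReal_ne_zero.2 hT.out.ne'
    push_cast [θ]
    field_simp
    ring
  have habs : |θ| = π * k.natAbs / 2 ^ (n + 1) := by
    rw [abs_div, abs_mul, abs_of_pos pi_pos, abs_of_pos (pow_pos two_pos (n + 1) : (0 : ℝ) < _),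
      Nat.cast_natAbs, Int.cast_abs]
  have hk_low : (2 : ℝ) ^ n ≤ k.natAbs := mod_cast hk
  have hk_up : (k.natAbs : ℝ) ≤ 2 ^ (n + 1) := mod_cast hk'.le
  have hcos : Real.cos θ ≤ 0 := by
    rw [← Real.cos_abs, habs]
    apply Real.cos_nonpos_of_pi_div_two_le_of_le
    · rw [le_div_iff₀ (by positivity), pow_succ]
      nlinarith [pi_pos]
    · rw [div_le_iff₀ (by positivity)]
      nlinarith [pi_pos, pow_pos (two_pos : (0 : ℝ) < 2) (n + 1)]
  rw [hfourier, norm_exp_mul_I_sub_one_sq]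
  linarith

theorem sum_sq_norm_fourierCoeff_mul_abs_le_of_log_eq {f : AddCircle T → ℂ} (hf : Integrable f haarAddCircle)
    {n : ℕ} {B : ℝ} (hB : ∀ t, ‖f (t + (T / 2 ^ (n + 2) : ℝ)) - f t‖ ≤ B) (s : Finset ℤ)
    (hs : ∀ k ∈ s, Nat.log 2 k.natAbs = n) :
    ∑ k ∈ s, ‖fourierCoeff f k‖ ^ 2 * |(k : ℝ)| ≤ 2 ^ n * B ^ 2 := by
  set c : AddCircle T := ((T / 2 ^ (n + 2) : ℝ) : AddCircle T)
  set g : AddCircle T → ℂ := fun t => f (t + c) - f t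
  have hg_int : Integrable g haarAddCircle := (hf.comp_add_right c).sub hf
  have hg_parseval : HasSum (fun k => ‖fourierCoeff g k‖ ^ 2) (∫ t, ‖g t‖ ^ 2 ∂haarAddCircle) :=
    hasSum_sq_norm_fourierCoeff_of_memLp (.of_bound hg_int.aestronglyMeasurable B (ae_of_all _ hB))
  have hg_energy : ∫ t, ‖g t‖ ^ 2 ∂haarAddCircle ≤ B ^ 2 := by
    have hbound : ∀ t, ‖‖g t‖ ^ 2‖ ≤ B ^ 2 := fun t => by
      rw [norm_pow, norm_norm]
      exact pow_le_pow_left₀ (norm_nonneg _) (hB t) 2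
    simpa using (le_abs_self _).trans
      (norm_integral_le_of_norm_le_const (μ := haarAddCircle) (ae_of_all _ hbound))
  have hterm : ∀ k ∈ s, ‖fourierCoeff f k‖ ^ 2 * |(k : ℝ)| ≤ 2 ^ n * ‖fourierCoeff g k‖ ^ 2 := by
    intro k hk
    -- `Nat.log 2 0 = 0` puts `k = 0` into block `0`, where its term vanishes.
    rcases eq_or_ne k 0 with rfl | hk0
    · simp only [Int.cast_zero, abs_zero, mul_zero]
      positivity
    have hlow := Nat.pow_log_le_self 2 (Int.natAbs_ne_zero.2 hk0)
    have hup := Nat.lt_pow_succ_log_self one_lt_two k.natAbs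
    rw [hs k hk] at hlow hup
    have hk_le : |(k : ℝ)| ≤ 2 ^ (n + 1) := by
      rw [← Int.cast_abs, ← Nat.cast_natAbs]
      exact_mod_cast hup.le
    calc ‖fourierCoeff f k‖ ^ 2 * |(k : ℝ)| ≤ 2 ^ n * (2 * ‖fourierCoeff f k‖ ^ 2) := by
          rw [pow_succ] at hk_le
          nlinarith [sq_nonneg ‖fourierCoeff f k‖]
      _ ≤ 2 ^ n * (‖fourier k c - 1‖ ^ 2 * ‖fourierCoeff f k‖ ^ 2) := by
          gcongr
          exact two_le_norm_fourier_dyadic_sub_one_sq hlow hup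
      _ = 2 ^ n * ‖fourierCoeff g k‖ ^ 2 := by
          rw [fourierCoeff_comp_add_right_sub hf, norm_mul, mul_pow]
  calc ∑ k ∈ s, ‖fourierCoeff f k‖ ^ 2 * |(k : ℝ)| ≤ ∑ k ∈ s, 2 ^ n * ‖fourierCoeff g k‖ ^ 2 :=
        Finset.sum_le_sum hterm
    _ = 2 ^ n * ∑ k ∈ s, ‖fourierCoeff g k‖ ^ 2 := (Finset.mul_sum _ _ _).symm
    _ ≤ 2 ^ n * B ^ 2 := by
        gcongr
        exact (sum_le_hasSum s (fun _ _ => by positivity) hg_parseval).trans hg_energy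

theorem summable_sq_norm_fourierCoeff_mul_abs_of_holder {α : ℝ} (hα : 1 / 2 < α)
    {f : AddCircle T → ℂ} {C : ℝ} (hf : ∀ x y, ‖f x - f y‖ ≤ C * dist x y ^ α) :
    Summable fun k : ℤ => ‖fourierCoeff f k‖ ^ 2 * |(k : ℝ)| := by
  have hf_int : Integrable f haarAddCircle :=
    (continuous_of_dist_le_mul_rpow (by linarith) (by simpa only [dist_eq_norm] using hf)
      ).integrable_of_hasCompactSupport (.of_compactSpace f)
  refine summable_of_sum_le_of_fiber (fun k => by positivity) (fun k => Nat.log 2 k.natAbs)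
    (summable_two_pow_mul_sq_mul_div_two_pow_rpow hα C hT.out.le)
    fun n s hs => sum_sq_norm_fourierCoeff_mul_abs_le_of_log_eq hf_int (fun t => ?_) s hs
  have hstep : ‖((T / 2 ^ (n + 2) : ℝ) : AddCircle T)‖ = T / 2 ^ (n + 2) := by
    have hpos : 0 < T / 2 ^ (n + 2) := by positivity [hT.out]
    rw [(norm_coe_eq_abs_iff T hT.out.ne').2 ?_, abs_of_pos hpos]
    rw [abs_of_pos hpos, abs_of_pos hT.out]
    exact div_le_div_of_nonneg_left hT.out.le two_pos
      (by simpa using pow_le_pow_right₀ (one_le_two (α := ℝ)) (by omega : 1 ≤ n + 2))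
  calc _ ≤ C * dist (t + ((T / 2 ^ (n + 2) : ℝ) : AddCircle T)) t ^ α := hf _ _
    _ = C * (T / 2 ^ (n + 2)) ^ α := by rw [dist_self_add_left, hstep]

end

/-- If `α > 1/2` and `f : 𝕋 → ℂ` satisfies the Lipschitz (Hölder) condition of order `α`,
then `f ∈ W_2^{1/2}(𝕋)`, i.e. `∑_{k∈ℤ} |f̂(k)|²|k| < ∞`. -/
theorem lipAlpha_mem_W_half_of_half_lt (α : ℝ) (hα : 1 / 2 < α)
    (f : AddCircle (2 * Real.pi) → ℂ) (C : ℝ)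
    (hf : ∀ t₁ t₂ : AddCircle (2 * Real.pi), ‖f t₁ - f t₂‖ ≤ C * dist t₁ t₂ ^ α) :
    Summable (fun k : ℤ => ‖fourierCoeff f k‖ ^ 2 * |(k : ℝ)|) :=
  summable_sq_norm_fourierCoeff_mul_abs_of_holder hα hf
end
end

section
/- There exists an absolute constant c > 0 with the following property: if f : 𝕋 → ℂ belongs to W_2^{1/2}(𝕋) and g : 𝕋 → ℂ is a square-integrable function satisfying |g(t₁) − g(t₂)| ≤ |f(t₁) − f(t₂)| for all t₁, t₂ ∈ 𝕋, then g ∈ W_2^{1/2}(𝕋) and (∑_{k∈ℤ} |ĝ(k)|²|k|)^{1/2} ≤ c·(∑_{k∈ℤ} |f̂(k)|²|k|)^{1/2}. -/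
/-!
With the kernel `K h = |e^{ih} - 1|⁻²` one has the Gagliardo-type identity
`∫∫ K h |u (t + h) - u t|² dt dh = ∑ₖ |û k|² |k|` for `u ∈ L²`: by Parseval the inner integral is
`∑ₖ |e^{ikh} - 1|² |û k|²`, and `|e^{ikh} - 1|² / |e^{ih} - 1|² = |∑_{j < |k|} e^{ijh}|²`
integrates to `|k|`. The left side only grows when the differences `|u t₁ - u t₂|` grow, so the
theorem holds with `c = 1`. The one extra point is that `f`, a priori only integrable, is in `L²`:
its coefficients are square summable, and an integrable function on the circle is determined by
its Fourier coefficients.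
-/

open Real MeasureTheory

noncomputable section

open AddCircle Filter Topology
open scoped ENNReal NNReal BoundedContinuousFunction

theorem MeasureTheory.Integrable.ae_eq_zero_of_forall_integral_smul_eq_zero
    {X E : Type*} [TopologicalSpace X] [HasOuterApproxClosed X] [MeasurableSpace X]
    [BorelSpace X] [NormedAddCommGroup E] [NormedSpace ℝ E] [CompleteSpace E] {μ : Measure X}
    {f : X → E} (hf : Integrable f μ) (h : ∀ φ : X →ᵇ ℝ≥0, ∫ x, (φ x : ℝ) • f x ∂μ = 0) :
    f =ᵐ[μ] 0 := by
  refine ae_eq_zero_of_forall_setIntegral_isClosed_eq_zero hf fun F hF => ?_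
  have hlim : Tendsto (fun n => ∫ x, (hF.apprSeq n x : ℝ) • f x ∂μ) atTop
      (𝓝 (∫ x, F.indicator f x ∂μ)) := by
    refine tendsto_integral_of_dominated_convergence (fun x => ‖f x‖)
      (fun n => (NNReal.continuous_coe.comp (hF.apprSeq n).continuous).aestronglyMeasurable.smul
        hf.1) hf.norm (fun n => ae_of_all _ fun x => ?_) (ae_of_all _ fun x => ?_)
    · rw [norm_smul, NNReal.norm_eq]
      exact mul_le_of_le_one_left (norm_nonneg _)
        (HasOuterApproxClosed.apprSeq_apply_le_one hF n x)
    · have hx := (NNReal.continuous_coe.tendsto _).comp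
        (tendsto_pi_nhds.mp (HasOuterApproxClosed.tendsto_apprSeq hF) x)
      convert hx.smul_const (f x) using 2
      · rfl
      · by_cases hxF : x ∈ F <;> simp [hxF]
  simp only [h, tendsto_const_nhds_iff] at hlim
  rw [← integral_indicator hF.measurableSet, hlim]

theorem Summable.of_mul_abs_intCast {a : ℤ → ℝ} (h : Summable fun k => a k * |(k : ℝ)|) :
    Summable a := by
  refine Summable.of_norm_bounded_eventually h.abs ?_
  filter_upwards [(Set.finite_singleton (0 : ℤ)).compl_mem_cofinite] with k hk
  rw [Real.norm_eq_abs, abs_mul, abs_abs]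
  exact le_mul_of_one_le_right (abs_nonneg _) (by exact_mod_cast Int.one_le_abs hk)

theorem summable_and_tsum_le_of_tsum_ofReal_le {ι : Type*} {a b : ι → ℝ} (ha : ∀ i, 0 ≤ a i)
    (hb : ∀ i, 0 ≤ b i) (hbs : Summable b)
    (h : ∑' i, ENNReal.ofReal (a i) ≤ ∑' i, ENNReal.ofReal (b i)) :
    Summable a ∧ ∑' i, a i ≤ ∑' i, b i := by
  rw [← ENNReal.ofReal_tsum_of_nonneg hb hbs] at h
  have has : Summable a :=
    (ENNReal.summable_toReal (ne_top_of_le_ne_top ENNReal.ofReal_ne_top h)).congr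
      fun i => ENNReal.toReal_ofReal (ha i)
  rw [← ENNReal.ofReal_tsum_of_nonneg ha has, ENNReal.ofReal_le_ofReal_iff (tsum_nonneg hb)] at h
  exact ⟨has, h⟩

variable {T : ℝ}

theorem fourier_sub_apply (n : ℤ) (x y : AddCircle T) :
    fourier n (x - y) = fourier n x * fourier (-n) y := by
  simp [fourier_apply, sub_eq_add_neg, toCircle_add]

theorem fourier_natCast_sub_one (n : ℕ) (x : AddCircle T) :
    fourier n x - 1 = (fourier 1 x - 1) * ∑ j ∈ Finset.range n, fourier j x := by
  have hstep (j : ℕ) :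
      (fourier 1 x - 1) * fourier j x = fourier (j + 1 : ℕ) x - fourier j x := by
    rw [Nat.cast_succ, add_comm, fourier_add]
    ring
  rw [Finset.mul_sum, Finset.sum_congr rfl fun j _ => hstep j,
    Finset.sum_range_sub (fun j : ℕ => fourier (j : ℤ) x), Nat.cast_zero, fourier_zero]

theorem enorm_fourier_sub_one_eq_natAbs (k : ℤ) (x : AddCircle T) :
    ‖fourier k x - 1‖ₑ = ‖fourier (k.natAbs : ℤ) x - 1‖ₑ := by
  obtain ⟨n, rfl | rfl⟩ := Int.eq_nat_or_neg k
  · rfl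
  · rw [Int.natAbs_neg, Int.natAbs_natCast, fourier_neg,
      ← RCLike.enorm_conj (fourier (n : ℤ) x - 1), map_sub, map_one]

variable [hT : Fact (0 < T)]

instance nullSingletonClass_haarAddCircle : NullSingletonClass (haarAddCircle (T := T)) := by
  refine ⟨fun x => ?_⟩
  have hvol : (volume : Measure (AddCircle T)) {x} = 0 := by
    rw [← Metric.closedBall_zero, AddCircle.volume_closedBall, mul_zero, min_eq_right hT.out.le,
      ENNReal.ofReal_zero]
  rw [volume_eq_smul_haarAddCircle, Measure.smul_apply, smul_eq_mul] at hvol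
  exact (mul_eq_zero.mp hvol).resolve_left (ENNReal.ofReal_pos.mpr hT.out).ne'

theorem fourier_one_ne_one {x : AddCircle T} (hx : x ≠ 0) : fourier 1 x ≠ 1 := by
  intro h
  refine hx (injective_toCircle hT.out.ne' ?_)
  ext
  rw [toCircle_zero, Circle.coe_one, ← fourier_one, h]

theorem fourierCoeff_sub {f g : AddCircle T → ℂ} (hf : Integrable f haarAddCircle)
    (hg : Integrable g haarAddCircle) :
    fourierCoeff (f - g) = fourierCoeff f - fourierCoeff g := by
  ext n
  simpa [fourierCoeff, mul_sub] using integral_sub (hf.fourier_smul (-n)) (hg.fourier_smul (-n))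

theorem fourierCoeff_comp_add_right_s11 (u : AddCircle T → ℂ) (h : AddCircle T) (k : ℤ) :
    fourierCoeff (fun t => u (t + h)) k = fourier k h * fourierCoeff u k := by
  have hshift := integral_add_right_eq_self (μ := haarAddCircle)
    (fun s => fourier (-k) (s - h) • u s) h
  simp only [add_sub_cancel_right] at hshift
  rw [fourierCoeff, hshift, fourierCoeff, ← integral_const_mul]
  congr 1 with s
  rw [fourier_sub_apply, neg_neg, smul_eq_mul, smul_eq_mul]
  ring

theorem integral_mul_eq_zero_of_fourierCoeff_eq_zero {d : AddCircle T → ℂ}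
    (hd : Integrable d haarAddCircle) (hfc : fourierCoeff d = 0) (φ : C(AddCircle T, ℂ)) :
    ∫ t, φ t * d t ∂haarAddCircle = 0 := by
  have hint (ψ : C(AddCircle T, ℂ)) : Integrable (fun t => ψ t * d t) haarAddCircle :=
    hd.bdd_mul ψ.continuous.aestronglyMeasurable (ae_of_all _ ψ.norm_coe_le_norm)
  let L : C(AddCircle T, ℂ) →ₗ[ℂ] ℂ :=
    { toFun ψ := ∫ t, ψ t * d t ∂haarAddCircle
      map_add' ψ χ := by
        simp only [ContinuousMap.add_apply, add_mul, integral_add (hint ψ) (hint χ)]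
      map_smul' c ψ := by
        simp only [ContinuousMap.smul_apply, smul_eq_mul, mul_assoc, integral_const_mul,
          RingHom.id_apply] }
  have hL (ψ : C(AddCircle T, ℂ)) : ‖L ψ‖ ≤ (∫ t, ‖d t‖ ∂haarAddCircle) * ‖ψ‖ := calc
    ‖L ψ‖ ≤ ∫ t, ‖ψ‖ * ‖d t‖ ∂haarAddCircle :=
      norm_integral_le_of_norm_le (hd.norm.const_mul _)
        (ae_of_all _ fun t => by rw [norm_mul]; gcongr; exact ψ.norm_coe_le_norm t)
    _ = (∫ t, ‖d t‖ ∂haarAddCircle) * ‖ψ‖ := by rw [integral_const_mul, mul_comm]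
  let Lc := L.mkContinuous _ hL
  have hspan : Submodule.span ℂ (Set.range fourier) ≤
      LinearMap.ker (Lc : C(AddCircle T, ℂ) →ₗ[ℂ] ℂ) := by
    rw [Submodule.span_le]
    rintro _ ⟨n, rfl⟩
    show ∫ t, fourier n t * d t ∂haarAddCircle = 0
    simpa [fourierCoeff] using congr_fun hfc (-n)
  have hker := Submodule.topologicalClosure_minimal _ hspan Lc.isClosed_ker
  rw [span_fourier_closure_eq_top] at hker
  exact hker Submodule.mem_top

theorem ae_eq_zero_of_fourierCoeff_eq_zero {d : AddCircle T → ℂ}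
    (hd : Integrable d haarAddCircle) (hfc : fourierCoeff d = 0) : d =ᵐ[haarAddCircle] 0 :=
  hd.ae_eq_zero_of_forall_integral_smul_eq_zero fun φ => by
    simp only [Complex.real_smul]
    exact integral_mul_eq_zero_of_fourierCoeff_eq_zero hd hfc ⟨fun t => ((φ t : ℝ) : ℂ), by fun_prop⟩

theorem hasSum_sq_fourierCoeff_of_memLp {u : AddCircle T → ℂ} (hu : MemLp u 2 haarAddCircle) :
    HasSum (fun k => ‖fourierCoeff u k‖ ^ 2) (∫ t, ‖u t‖ ^ 2 ∂haarAddCircle) := by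
  convert hasSum_sq_fourierCoeff (hu.toLp u) using 1
  · rw [fourierCoeff_congr_ae hu.coeFn_toLp]
  · exact integral_congr_ae (hu.coeFn_toLp.mono fun t ht => by simp only [ht])

theorem memLp_two_of_summable_sq_fourierCoeff {f : AddCircle T → ℂ}
    (hf : Integrable f haarAddCircle) (hsum : Summable fun k => ‖fourierCoeff f k‖ ^ 2) :
    MemLp f 2 haarAddCircle := by
  let F : Lp ℂ 2 (haarAddCircle (T := T)) :=
    fourierBasis.repr.symm ⟨fourierCoeff f, memℓp_gen (by simpa using hsum)⟩
  have hF : fourierCoeff F = fourierCoeff f := by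
    ext k
    rw [← fourierBasis_repr, LinearIsometryEquiv.apply_symm_apply]
  have hFint : Integrable F haarAddCircle := (Lp.memLp F).integrable one_le_two
  refine (Lp.memLp F).ae_eq ?_
  filter_upwards [ae_eq_zero_of_fourierCoeff_eq_zero (hFint.sub hf)
    (by rw [fourierCoeff_sub hFint hf, hF, sub_self])] with t ht
  exact sub_eq_zero.mp ht

theorem lintegral_enorm_sq_eq_tsum {u : AddCircle T → ℂ} (hu : MemLp u 2 haarAddCircle) :
    ∫⁻ t, ‖u t‖ₑ ^ 2 ∂haarAddCircle = ∑' k, ‖fourierCoeff u k‖ₑ ^ 2 := by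
  have h := hasSum_sq_fourierCoeff_of_memLp hu
  simp_rw [← ofReal_norm, ← ENNReal.ofReal_pow (norm_nonneg _),
    ← ENNReal.ofReal_tsum_of_nonneg (fun _ => by positivity) h.summable, h.tsum_eq]
  exact (ofReal_integral_eq_lintegral_ofReal (hu.integrable_norm_pow two_ne_zero)
    (ae_of_all _ fun _ => by positivity)).symm

theorem lintegral_enorm_sub_comp_add_right_sq {u : AddCircle T → ℂ}
    (hu : MemLp u 2 haarAddCircle) (h : AddCircle T) :
    ∫⁻ t, ‖u (t + h) - u t‖ₑ ^ 2 ∂haarAddCircle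
      = ∑' k, ‖fourier k h - 1‖ₑ ^ 2 * ‖fourierCoeff u k‖ₑ ^ 2 := by
  have hshift : MemLp (fun t => u (t + h)) 2 haarAddCircle :=
    hu.comp_measurePreserving (measurePreserving_add_right _ h)
  refine (lintegral_enorm_sq_eq_tsum (hshift.sub hu)).trans ?_
  rw [fourierCoeff_sub (hshift.integrable one_le_two) (hu.integrable one_le_two)]
  simp only [Pi.sub_apply, fourierCoeff_comp_add_right_s11, ← sub_one_mul, enorm_mul, mul_pow]

theorem lintegral_enorm_sum_fourier_sq (s : Finset ℤ) :
    ∫⁻ t : AddCircle T, ‖∑ j ∈ s, fourier j t‖ₑ ^ 2 ∂haarAddCircle = s.card := by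
  have hsum : (fun t => ∑ j ∈ s, fourier j t) = ⇑(∑ j ∈ s, fourier (T := T) j) := by
    ext t
    simp only [ContinuousMap.coe_sum, Finset.sum_apply]
  have hcoeff (k : ℤ) : fourierCoeff (fun t => ∑ j ∈ s, fourier (T := T) j t) k
      = if k ∈ s then 1 else 0 := by
    rw [hsum, ContinuousMap.coe_sum, fourierCoeff.sum _ _ fun j _ =>
      memLp_one_iff_integrable.mp ((fourier j).memLp _ ℂ)]
    simp only [fourierCoeff_fourier, Finset.sum_apply, Finset.sum_pi_single]
  rw [lintegral_enorm_sq_eq_tsum (hsum ▸ (∑ j ∈ s, fourier j).memLp _ ℂ), tsum_eq_sum (s := s)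
    fun k hk => by rw [hcoeff, if_neg hk, enorm_zero, zero_pow two_ne_zero]]
  rw [Finset.sum_congr rfl fun k hk => by rw [hcoeff, if_pos hk, enorm_one, one_pow]]
  simp

def gagliardoKernel (h : AddCircle T) : ℝ≥0∞ := (‖fourier 1 h - 1‖ₑ ^ 2)⁻¹

theorem lintegral_gagliardoKernel_mul_enorm_fourier_sub_one_sq (k : ℤ) :
    ∫⁻ h : AddCircle T, gagliardoKernel h * ‖fourier k h - 1‖ₑ ^ 2 ∂haarAddCircle = k.natAbs := by
  have hae : ∀ᵐ h : AddCircle T ∂haarAddCircle, gagliardoKernel h * ‖fourier k h - 1‖ₑ ^ 2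
      = ‖∑ j ∈ (Finset.range k.natAbs).map Nat.castEmbedding, fourier j h‖ₑ ^ 2 := by
    filter_upwards [(haarAddCircle (T := T)).ae_ne 0] with h hh
    have hne : ‖fourier 1 h - 1‖ₑ ^ 2 ≠ 0 := by simpa [sub_eq_zero] using fourier_one_ne_one hh
    rw [gagliardoKernel, enorm_fourier_sub_one_eq_natAbs k, fourier_natCast_sub_one, enorm_mul,
      mul_pow, ENNReal.inv_mul_cancel_left hne (by finiteness), Finset.sum_map]
    rfl
  rw [lintegral_congr_ae hae, lintegral_enorm_sum_fourier_sq, Finset.card_map, Finset.card_range]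

def gagliardoEnergy (u : AddCircle T → ℂ) : ℝ≥0∞ :=
  ∫⁻ h, gagliardoKernel h * ∫⁻ t, ‖u (t + h) - u t‖ₑ ^ 2 ∂haarAddCircle ∂haarAddCircle

theorem gagliardoEnergy_eq_tsum {u : AddCircle T → ℂ} (hu : MemLp u 2 haarAddCircle) :
    gagliardoEnergy u = ∑' k : ℤ, ENNReal.ofReal (‖fourierCoeff u k‖ ^ 2 * |(k : ℝ)|) := by
  have hK : Measurable (gagliardoKernel (T := T)) := by
    unfold gagliardoKernel
    fun_prop
  calc gagliardoEnergy u
      = ∫⁻ h : AddCircle T, ∑' k, gagliardoKernel h * ‖fourier k h - 1‖ₑ ^ 2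
          * ‖fourierCoeff u k‖ₑ ^ 2 ∂haarAddCircle := by
        simp only [gagliardoEnergy, lintegral_enorm_sub_comp_add_right_sq hu, mul_assoc,
          ENNReal.tsum_mul_left]
    _ = ∑' k : ℤ, k.natAbs * ‖fourierCoeff u k‖ₑ ^ 2 := by
        rw [lintegral_tsum fun k => by fun_prop]
        congr 1 with k
        rw [lintegral_mul_const' _ _ (by finiteness),
          lintegral_gagliardoKernel_mul_enorm_fourier_sub_one_sq]
    _ = _ := by
        congr 1 with k
        rw [ENNReal.ofReal_mul (by positivity), ENNReal.ofReal_pow (norm_nonneg _), ofReal_norm,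
          mul_comm, ← Int.cast_abs, Int.abs_eq_natAbs, Int.cast_natCast, ENNReal.ofReal_natCast]

theorem gagliardoEnergy_le_of_forall_norm_sub_le {f g : AddCircle T → ℂ}
    (h : ∀ t₁ t₂, ‖g t₁ - g t₂‖ ≤ ‖f t₁ - f t₂‖) : gagliardoEnergy g ≤ gagliardoEnergy f := by
  unfold gagliardoEnergy
  gcongr with s t
  exact enorm_le_iff_norm_le.mpr (h _ _)

/-- There is an absolute constant `c > 0` such that: if `f : 𝕋 → ℂ` belongs to
`W_2^{1/2}(𝕋)` (it is integrable and `∑ |f̂(k)|²|k| < ∞`) and `g : 𝕋 → ℂ` is a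
square-integrable function with `|g(t₁) − g(t₂)| ≤ |f(t₁) − f(t₂)|` for all `t₁, t₂`, then
`g ∈ W_2^{1/2}(𝕋)` and `(∑ |ĝ(k)|²|k|)^{1/2} ≤ c (∑ |f̂(k)|²|k|)^{1/2}`. -/
theorem contraction_mem_W_half :
    ∃ c > (0 : ℝ), ∀ f g : AddCircle (2 * Real.pi) → ℂ,
      Integrable f volume →
      Summable (fun k : ℤ => ‖fourierCoeff f k‖ ^ 2 * |(k : ℝ)|) →
      MemLp g 2 volume →
      (∀ t₁ t₂ : AddCircle (2 * Real.pi), ‖g t₁ - g t₂‖ ≤ ‖f t₁ - f t₂‖) →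
      Summable (fun k : ℤ => ‖fourierCoeff g k‖ ^ 2 * |(k : ℝ)|) ∧
        Real.sqrt (∑' k : ℤ, ‖fourierCoeff g k‖ ^ 2 * |(k : ℝ)|) ≤
          c * Real.sqrt (∑' k : ℤ, ‖fourierCoeff f k‖ ^ 2 * |(k : ℝ)|) := by
  refine ⟨1, one_pos, fun f g hf hfs hg hfg => ?_⟩
  have hf2 : MemLp f 2 haarAddCircle :=
    memLp_two_of_summable_sq_fourierCoeff
      (memLp_one_iff_integrable.mp (memLp_one_iff_integrable.mpr hf).haarAddCircle)
      (Summable.of_mul_abs_intCast hfs)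
  have henergy := gagliardoEnergy_le_of_forall_norm_sub_le hfg
  rw [gagliardoEnergy_eq_tsum hg.haarAddCircle, gagliardoEnergy_eq_tsum hf2] at henergy
  obtain ⟨hgs, hle⟩ := summable_and_tsum_le_of_tsum_ofReal_le (fun _ => by positivity)
    (fun _ => by positivity) hfs henergy
  exact ⟨hgs, by rw [one_mul]; exact Real.sqrt_le_sqrt hle⟩
end
end
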